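/- Let ℓ ≥ 5 be an integer and let G be a graph such that every subgraph J of G with at least one vertex satisfies (ℓ−2)·e(J) < (ℓ−1)·v(J) (i.e. m(G) < (ℓ−1)/(ℓ−2)). Let (H₁,…,H_t) be a construction sequence of ℓ-cycles in G, and for 1 ≤ i ≤ t−1 set e_i = |E(H_{i+1}) \ E(H_i)| and v_i = |V(H_{i+1}) \ V(H_i)|. Then there is at most one index 1 ≤ i ≤ t−1 with e_i ≥ v_i + 2 (in particular, a configuration of type (B_j) appears at most once). -/

import Mathlib

/-- `C` is an `ℓ`-cycle of `G`, given as a subgraph of `G`. -/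
def IsCycleSubgraph {V : Type*} (G : SimpleGraph V) (ℓ : ℕ) (C : G.Subgraph) : Prop :=
  Nonempty (C.coe ≃g SimpleGraph.cycleGraph ℓ)

/-- `(H 1, …, H t)` is a construction sequence of `ℓ`-cycles in `G`: `H 1` is an
`ℓ`-cycle of `G` and each `H (i+1)` is obtained from `H i` by adding an `ℓ`-cycle `C`
of `G` with `C ⊄ H i` and `E(C) ∩ E(H i) ≠ ∅`. -/
def IsConstructionSeq {V : Type*} (G : SimpleGraph V) (ℓ t : ℕ)
    (H : ℕ → G.Subgraph) : Prop :=
  1 ≤ t ∧ IsCycleSubgraph G ℓ (H 1) ∧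
    ∀ i, 1 ≤ i → i < t → ∃ C : G.Subgraph, IsCycleSubgraph G ℓ C ∧
      ¬ C ≤ H i ∧ (C.edgeSet ∩ (H i).edgeSet).Nonempty ∧ H (i + 1) = H i ⊔ C

/-!
Track the excess `e(H) - v(H)`. It is `0` for the first cycle, and each added cycle `C` raises it
by at least one: `C` shares an edge with `H`, so it brings at most `ℓ - 2` new vertices, and going
around `C` every new vertex starts a new edge, as does the first new edge after an old one. If two
steps `a < b` had `e_i ≥ v_i + 2`, then `H_{b+1}` would have excess at least `b + 2` on at most
`ℓ + b (ℓ - 2)` vertices, and `(ℓ - 2)(e - v) < v` would force `2 (ℓ - 2) < ℓ`, i.e. `ℓ < 4`.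
-/

open SimpleGraph

open Fin.NatCast in
lemma Fin.exists_and_not_add_one {n : ℕ} {p : Fin (n + 1) → Prop} {a b : Fin (n + 1)}
    (ha : p a) (hb : ¬ p b) : ∃ x, p x ∧ ¬ p (x + 1) := by
  by_contra! hstep
  have hp : ∀ k : ℕ, p (a + (k : Fin (n + 1))) := by
    intro k
    induction k with
    | zero => simpa using ha
    | succ k ih => simpa [add_assoc] using hstep _ ih
  exact hb (by simpa using hp (b - a).val)

lemma Fin.ne_add_one_add_one {n : ℕ} (a : Fin (n + 3)) : a ≠ a + 1 + 1 := by
  rw [add_assoc, ne_eq, left_eq_add, Fin.ext_iff]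
  simp [Fin.val_add, Nat.mod_eq_of_lt (show 2 < n + 3 by omega)]

lemma injective_sym2_mk_succ {α : Type*} {n : ℕ} {w : Fin (n + 3) → α}
    (hw : Function.Injective w) : Function.Injective fun x => s(w x, w (x + 1)) := by
  intro a b h
  rcases Sym2.eq_iff.mp h with ⟨hab, -⟩ | ⟨hab, hba⟩
  · exact hw hab
  · exact absurd ((hw hba).symm.trans (congrArg (· + 1) (hw hab))) (Fin.ne_add_one_add_one b)

section

variable {V : Type*} {G : SimpleGraph V}

lemma IsCycleSubgraph.ncard_verts {ℓ : ℕ} {C : G.Subgraph} (hC : IsCycleSubgraph G ℓ C) :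
    C.verts.ncard = ℓ := by
  obtain ⟨φ⟩ := hC
  rw [← Nat.card_coe_set_eq, Nat.card_congr φ.toEquiv, Nat.card_eq_fintype_card,
    Fintype.card_fin]

lemma IsCycleSubgraph.exists_enumeration {n : ℕ} {C : G.Subgraph}
    (hC : IsCycleSubgraph G (n + 3) C) :
    ∃ w : Fin (n + 3) → V, Function.Injective w ∧ Set.range w = C.verts ∧
      C.edgeSet = Set.range fun x => s(w x, w (x + 1)) := by
  obtain ⟨φ⟩ := hC
  refine ⟨fun x => φ.symm x, Subtype.val_injective.comp φ.symm.injective, ?_, ?_⟩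
  · ext v
    exact ⟨by rintro ⟨x, rfl⟩; exact (φ.symm x).2, fun hv => ⟨φ ⟨v, hv⟩, by simp⟩⟩
  ext e
  induction e using Sym2.ind with
  | _ u v =>
    refine ⟨fun huv => ?_, ?_⟩
    · have hu := C.edge_vert huv
      have hv := C.edge_vert huv.symm
      have hφ : (cycleGraph (n + 1 + 2)).Adj (φ ⟨u, hu⟩) (φ ⟨v, hv⟩) :=
        φ.map_adj_iff.mpr huv
      rcases cycleGraph_adj.mp hφ with h | h <;> rw [sub_eq_iff_eq_add'] at h
      · exact ⟨φ ⟨v, hv⟩, Sym2.eq_swap.trans (by simp [← h])⟩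
      · exact ⟨φ ⟨u, hu⟩, by simp [← h]⟩
    · rintro ⟨x, hx⟩
      rw [← hx]
      exact φ.symm.map_adj_iff.mpr (cycleGraph_adj.mpr (Or.inr (add_sub_cancel_left x 1)))

lemma IsCycleSubgraph.ncard_edgeSet {n : ℕ} {C : G.Subgraph}
    (hC : IsCycleSubgraph G (n + 3) C) : C.edgeSet.ncard = n + 3 := by
  obtain ⟨w, hw, -, hE⟩ := hC.exists_enumeration
  rw [hE, ← Set.image_univ, Set.ncard_image_of_injective _ (injective_sym2_mk_succ hw),
    Set.ncard_univ, Nat.card_eq_fintype_card, Fintype.card_fin]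

lemma IsCycleSubgraph.ncard_verts_diff_add_two_le [Finite V] {ℓ : ℕ} {C K : G.Subgraph}
    (hC : IsCycleSubgraph G ℓ C) (hCK : (C.edgeSet ∩ K.edgeSet).Nonempty) :
    (C.verts \ K.verts).ncard + 2 ≤ ℓ := by
  obtain ⟨e, heC, heK⟩ := hCK
  induction e using Sym2.ind with
  | _ u v =>
    have hsub : {u, v} ⊆ C.verts ∩ K.verts :=
      Set.insert_subset ⟨C.edge_vert heC, K.edge_vert heK⟩
        (Set.singleton_subset_iff.mpr ⟨C.edge_vert heC.symm, K.edge_vert heK.symm⟩)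
    have hpair := Set.ncard_le_ncard hsub
    rw [Set.ncard_pair (C.adj_sub heC).ne] at hpair
    have := Set.ncard_inter_add_ncard_sdiff_eq_ncard C.verts K.verts
    rw [hC.ncard_verts] at this
    omega

lemma IsCycleSubgraph.ncard_verts_diff_lt_ncard_edgeSet_diff [Finite V] {n : ℕ}
    {C K : G.Subgraph} (hC : IsCycleSubgraph G (n + 3) C) (hCK : ¬ C ≤ K)
    (hshared : (C.edgeSet ∩ K.edgeSet).Nonempty) :
    (C.verts \ K.verts).ncard < (C.edgeSet \ K.edgeSet).ncard := by
  obtain ⟨w, hw, hV, hE⟩ := hC.exists_enumeration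
  set g : Fin (n + 3) → Sym2 V := fun x => s(w x, w (x + 1))
  have hg : Function.Injective g := injective_sym2_mk_succ hw
  obtain ⟨x₀, hx₀⟩ : ∃ x, g x ∈ K.edgeSet := by
    obtain ⟨e, heC, heK⟩ := hshared
    rw [hE] at heC
    obtain ⟨x, rfl⟩ := heC
    exact ⟨x, heK⟩
  obtain ⟨x₁, hx₁⟩ : ∃ x, g x ∉ K.edgeSet := by
    by_contra! hall
    refine hCK ⟨?_, fun u v huv => ?_⟩
    · rw [← hV]
      rintro _ ⟨x, rfl⟩
      exact K.edge_vert (hall x)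
    · have : s(u, v) ∈ C.edgeSet := huv
      rw [hE] at this
      obtain ⟨x, hx⟩ := this
      exact (Subgraph.mem_edgeSet).mp (hx ▸ hall x)
  -- an old edge followed by a new one: its middle vertex is old, yet starts a new edge
  obtain ⟨x, hxK, hx1K⟩ := Fin.exists_and_not_add_one (p := fun y => g y ∈ K.edgeSet) hx₀ hx₁
  set N : Set (Fin (n + 3)) := {y | w y ∉ K.verts}
  have hx1N : x + 1 ∉ N := fun h => h (K.edge_vert (Subgraph.mem_edgeSet.mp hxK).symm)
  have hnewV : C.verts \ K.verts = w '' N := by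
    rw [← hV]
    ext v
    constructor
    · rintro ⟨⟨y, rfl⟩, hy⟩
      exact ⟨y, hy, rfl⟩
    · rintro ⟨y, hy, rfl⟩
      exact ⟨⟨y, rfl⟩, hy⟩
  have hnewE : g '' insert (x + 1) N ⊆ C.edgeSet \ K.edgeSet := by
    rintro _ ⟨y, hy, rfl⟩
    refine ⟨hE ▸ ⟨y, rfl⟩, ?_⟩
    rcases hy with rfl | hy
    · exact hx1K
    · exact fun hyK => hy (K.edge_vert (Subgraph.mem_edgeSet.mp hyK))
  calc (C.verts \ K.verts).ncard = N.ncard := by rw [hnewV, Set.ncard_image_of_injective _ hw]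
    _ < (insert (x + 1) N).ncard := by rw [Set.ncard_insert_of_notMem hx1N]; omega
    _ = (g '' insert (x + 1) N).ncard := (Set.ncard_image_of_injective _ hg).symm
    _ ≤ (C.edgeSet \ K.edgeSet).ncard := Set.ncard_le_ncard hnewE

noncomputable def SimpleGraph.Subgraph.excess (J : G.Subgraph) : ℤ := J.edgeSet.ncard - J.verts.ncard

lemma SimpleGraph.Subgraph.excess_eq_of_le [Finite V] {K K' : G.Subgraph} (h : K ≤ K') :
    K'.excess = K.excess + (K'.edgeSet \ K.edgeSet).ncard - (K'.verts \ K.verts).ncard := by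
  have hE := Set.ncard_sdiff_add_ncard_of_subset (Subgraph.edgeSet_mono h)
  have hV := Set.ncard_sdiff_add_ncard_of_subset (Subgraph.verts_mono h)
  simp only [Subgraph.excess]
  omega

namespace IsConstructionSeq

variable {ℓ t : ℕ} {H : ℕ → G.Subgraph} {i : ℕ}

lemma exists_cycle (hH : IsConstructionSeq G ℓ t H) (hi : 1 ≤ i) (hit : i < t) :
    ∃ C : G.Subgraph, IsCycleSubgraph G ℓ C ∧ ¬ C ≤ H i ∧
      (C.edgeSet ∩ (H i).edgeSet).Nonempty ∧ H (i + 1) = H i ⊔ C :=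
  hH.2.2 i hi hit

lemma le_succ (hH : IsConstructionSeq G ℓ t H) (hi : 1 ≤ i) (hit : i < t) : H i ≤ H (i + 1) := by
  obtain ⟨C, -, -, -, hC⟩ := hH.exists_cycle hi hit
  exact hC ▸ le_sup_left

lemma ncard_verts_succ_add_two_le [Finite V] (hH : IsConstructionSeq G ℓ t H) (hi : 1 ≤ i)
    (hit : i < t) : (H (i + 1)).verts.ncard + 2 ≤ (H i).verts.ncard + ℓ := by
  obtain ⟨C, hC, -, hshared, hsup⟩ := hH.exists_cycle hi hit
  have hnew := hC.ncard_verts_diff_add_two_le hshared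
  have hV := Set.ncard_sdiff_add_ncard_of_subset (Subgraph.verts_mono (hH.le_succ hi hit))
  rw [hsup, Subgraph.verts_sup, Set.union_sdiff_left] at hV
  rw [hsup, Subgraph.verts_sup]
  omega

lemma excess_succ_ge [Finite V] {n : ℕ} (hH : IsConstructionSeq G (n + 3) t H) (hi : 1 ≤ i)
    (hit : i < t) : (H i).excess + 1 ≤ (H (i + 1)).excess := by
  obtain ⟨C, hC, hCH, hshared, hsup⟩ := hH.exists_cycle hi hit
  have hnew := hC.ncard_verts_diff_lt_ncard_edgeSet_diff hCH hshared
  rw [Subgraph.excess_eq_of_le (hH.le_succ hi hit), hsup, Subgraph.verts_sup,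
    Subgraph.edgeSet_sup, Set.union_sdiff_left, Set.union_sdiff_left]
  omega

lemma excess_add_two_le [Finite V] (hH : IsConstructionSeq G ℓ t H) (hi : 1 ≤ i) (hit : i < t)
    (hnew : ((H (i + 1)).verts \ (H i).verts).ncard + 2 ≤
      ((H (i + 1)).edgeSet \ (H i).edgeSet).ncard) :
    (H i).excess + 2 ≤ (H (i + 1)).excess := by
  rw [Subgraph.excess_eq_of_le (hH.le_succ hi hit)]
  omega

lemma ncard_verts_le [Finite V] (hH : IsConstructionSeq G ℓ t H) {k : ℕ} (hk : k < t) :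
    (H (k + 1)).verts.ncard + 2 * k ≤ ℓ * (k + 1) := by
  induction k with
  | zero => simp [hH.2.1.ncard_verts]
  | succ k ih =>
    have := hH.ncard_verts_succ_add_two_le (by omega) hk
    have := ih (by omega)
    rw [show ℓ * (k + 1 + 1) = ℓ * (k + 1) + ℓ by ring]
    omega

lemma excess_add_le [Finite V] {n : ℕ} (hH : IsConstructionSeq G (n + 3) t H) {j k : ℕ}
    (hj : 1 ≤ j) (hjk : j ≤ k) (hk : k ≤ t) : (H j).excess + (k - j : ℤ) ≤ (H k).excess := by
  induction k, hjk using Nat.le_induction with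
  | base => simp
  | succ k hjk ih =>
    have := hH.excess_succ_ge (by omega) hk
    have := ih (by omega)
    push_cast
    linarith

lemma excess_one {n : ℕ} (hH : IsConstructionSeq G (n + 3) t H) : (H 1).excess = 0 := by
  simp [Subgraph.excess, hH.2.1.ncard_verts, hH.2.1.ncard_edgeSet]

end IsConstructionSeq

end

/-- In a construction sequence of `ℓ`-cycles in a graph `G` with `m(G) < (ℓ-1)/(ℓ-2)`,
there is at most one index `1 ≤ i ≤ t-1` with `e i ≥ v i + 2`, where
`e i = |E(H (i+1)) \\ E(H i)|` and `v i = |V(H (i+1)) \\ V(H i)|` (in particular, a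
configuration of type `(B_j)` appears at most once). -/
theorem configuration_B_at_most_once {V : Type*} [Fintype V]
    (ℓ : ℕ) (hℓ : 5 ≤ ℓ) (G : SimpleGraph V)
    (hG : ∀ J : G.Subgraph, J.verts.Nonempty →
      (ℓ - 2) * J.edgeSet.ncard < (ℓ - 1) * J.verts.ncard)
    (t : ℕ) (H : ℕ → G.Subgraph) (hH : IsConstructionSeq G ℓ t H) :
    {i : ℕ | 1 ≤ i ∧ i < t ∧
      ((H (i + 1)).verts \ (H i).verts).ncard + 2 ≤
        ((H (i + 1)).edgeSet \ (H i).edgeSet).ncard}.Subsingleton := by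
  obtain ⟨n, rfl⟩ : ∃ n, ℓ = n + 3 := ⟨ℓ - 3, by omega⟩
  intro a ha b hb
  by_contra hab
  wlog hlt : a < b generalizing a b
  · exact this hb ha (Ne.symm hab) (by omega)
  obtain ⟨ha1, hat, ha⟩ := ha
  obtain ⟨hb1, hbt, hb⟩ := hb
  have hexcess : (b + 2 : ℤ) ≤ (H (b + 1)).excess := by
    have hstart := hH.excess_one
    have hupto_a := hH.excess_add_le le_rfl ha1 hat.le
    have hjump_a := hH.excess_add_two_le ha1 hat ha
    have hupto_b := hH.excess_add_le (by omega) hlt hbt.le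
    have hjump_b := hH.excess_add_two_le hb1 hbt hb
    push_cast at hupto_a hupto_b
    linarith
  simp only [Subgraph.excess] at hexcess
  have hne : (H (b + 1)).verts.Nonempty := by
    obtain ⟨e, he⟩ := Set.nonempty_of_ncard_ne_zero (s := (H (b + 1)).edgeSet) (by omega)
    induction e using Sym2.ind with
    | _ u v => exact ⟨u, (H (b + 1)).edge_vert he⟩
  have hverts := hH.ncard_verts_le hbt
  have hdense := hG (H (b + 1)) hne
  rw [show n + 3 - 2 = n + 1 by omega, show n + 3 - 1 = n + 2 by omega] at hdense
  zify at hverts hdense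
  nlinarith
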